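/- (Partial 2-out-of-3) Let f and g be composable morphisms in 𝒞 such that g and gf are weak equivalences. Then f is also a weak equivalence in each of the following cases: (i) g and gf are acyclic fibrations; (ii) g is an acyclic fibration and gf is an acyclic cofibration. -/

import Mathlib

open CategoryTheory CategoryTheory.Limits

universe v u

variable {𝒜 : Type u} [Category.{v} 𝒜] [Abelian 𝒜]

/-- `(f, g)` forms a short exact sequence `0 ⟶ X ⟶ Y ⟶ Z ⟶ 0` in the ambient
abelian category `𝒜`. -/
def IsShortExactSeq {X Y Z : 𝒜} (f : X ⟶ Y) (g : Y ⟶ Z) : Prop :=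
  ∃ w : f ≫ g = 0, (ShortComplex.mk f g w).ShortExact

/-- A class of objects is closed under isomorphisms. -/
def IsoClosed (P : 𝒜 → Prop) : Prop := ∀ ⦃X Y : 𝒜⦄, (X ≅ Y) → P X → P Y

/-- `Ext¹(X, Y) = 0` relative to the exact subcategory determined by `E`:
every short exact sequence `0 ⟶ Y ⟶ M ⟶ X ⟶ 0` in `E` splits. -/
def Ext1IsZero (E : 𝒜 → Prop) (X Y : 𝒜) : Prop :=
  ∀ ⦃M : 𝒜⦄ (f : Y ⟶ M) (g : M ⟶ X), E M → IsShortExactSeq f g →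
    ∃ r : M ⟶ Y, f ≫ r = 𝟙 Y

/-- `(C, I)` is a cotorsion pair in the exact subcategory of `𝒜` determined by
the class of objects `E`: the two classes are each other's orthogonal
complement with respect to `Ext¹`. -/
structure IsCotorsionPair (E C I : 𝒜 → Prop) : Prop where
  right_eq : ∀ Y, I Y ↔ (E Y ∧ ∀ ⦃X⦄, C X → Ext1IsZero E X Y)
  left_eq : ∀ X, C X ↔ (E X ∧ ∀ ⦃Y⦄, I Y → Ext1IsZero E X Y)

/-- The cotorsion pair `(C, I)` in `E` is complete: every object of `E` admits
both kinds of approximation sequences. -/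
def IsCompleteCP (E C I : 𝒜 → Prop) : Prop :=
  (∀ A, E A → ∃ (Y P : 𝒜) (f : A ⟶ Y) (g : Y ⟶ P),
      I Y ∧ C P ∧ IsShortExactSeq f g) ∧
  (∀ A, E A → ∃ (Y P : 𝒜) (f : Y ⟶ P) (g : P ⟶ A),
      I Y ∧ C P ∧ IsShortExactSeq f g)

/-- The cotorsion pair is hereditary: `C` is closed under kernels of
admissible epimorphisms in `E`. -/
def IsHereditaryCP (E C : 𝒜 → Prop) : Prop :=
  ∀ ⦃X Y Z : 𝒜⦄ (f : X ⟶ Y) (g : Y ⟶ Z),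
    IsShortExactSeq f g → E X → C Y → C Z → C X

/-- A cofibration: an admissible monomorphism between objects of `C` whose
cokernel lies in `C`. -/
def IsCofib (C : 𝒜 → Prop) {X Y : 𝒜} (f : X ⟶ Y) : Prop :=
  C X ∧ C Y ∧ ∃ (W : 𝒜) (g : Y ⟶ W), C W ∧ IsShortExactSeq f g

/-- An acyclic fibration: an admissible epimorphism in `E` whose kernel lies
in `I`. -/
def IsAcyclicFib (E I : 𝒜 → Prop) {Y Z : 𝒜} (g : Y ⟶ Z) : Prop :=
  E Y ∧ E Z ∧ ∃ (K : 𝒜) (k : K ⟶ Y), I K ∧ IsShortExactSeq k g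

/-- An acyclic cofibration: an admissible monomorphism between objects of `C`
whose cokernel lies in `C ∩ Z`. -/
def IsAcyclicCofib (C Zc : 𝒜 → Prop) {X Y : 𝒜} (f : X ⟶ Y) : Prop :=
  C X ∧ C Y ∧ ∃ (W : 𝒜) (g : Y ⟶ W), C W ∧ Zc W ∧ IsShortExactSeq f g

/-- A weak equivalence: a morphism between objects of `C` that factors as an
acyclic cofibration followed by an acyclic fibration. -/
def IsWeakEquiv (E C I Zc : 𝒜 → Prop) {X Y : 𝒜} (f : X ⟶ Y) : Prop :=
  C X ∧ C Y ∧ ∃ (M : 𝒜) (i : X ⟶ M) (p : M ⟶ Y),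
    IsAcyclicCofib C Zc i ∧ IsAcyclicFib E I p ∧ i ≫ p = f

/-- The standing setup: a complete hereditary cotorsion pair `(Cc, Ip)` in the
exact subcategory of `𝒜` determined by the isomorphism-closed,
extension-closed class `E`, together with an isomorphism-closed class
`Zc ⊆ E` with `Ip ⊆ Zc`, such that `Zc ∩ Cc` is closed under extensions and
under cokernels of admissible monomorphisms in `Cc`. -/
structure CotorsionSetup (E Cc Ip Zc : 𝒜 → Prop) : Prop where
  isoE : IsoClosed E
  isoC : IsoClosed Cc
  isoI : IsoClosed Ip
  isoZ : IsoClosed Zc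
  extClosedE : ∀ ⦃X Y Z : 𝒜⦄ (f : X ⟶ Y) (g : Y ⟶ Z),
    IsShortExactSeq f g → E X → E Z → E Y
  cp : IsCotorsionPair E Cc Ip
  complete : IsCompleteCP E Cc Ip
  hereditary : IsHereditaryCP E Cc
  zSubE : ∀ ⦃X⦄, Zc X → E X
  iSubZ : ∀ ⦃X⦄, Ip X → Zc X
  zcExtClosed : ∀ ⦃X Y Z : 𝒜⦄ (f : X ⟶ Y) (g : Y ⟶ Z), IsShortExactSeq f g →
    Cc X → Cc Y → Cc Z → Zc X → Zc Z → Zc Y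
  zcCokerClosed : ∀ ⦃X Y Z : 𝒜⦄ (f : X ⟶ Y) (g : Y ⟶ Z), IsShortExactSeq f g →
    Cc X → Cc Y → Cc Z → Zc X → Zc Y → Zc Z

/-! In case (i) let `k : K ⟶ Y` and `l : L ⟶ X` be the kernels of `g` and `f ≫ g`. Then `f`
factors as `biprod.inl : X ⟶ X ⊞ K` followed by `biprod.desc f k`; the first map has cokernel
`K`, which lies in `𝒞 ∩ 𝒞⊥ ⊆ 𝒞 ∩ 𝒵` because the pair is hereditary, and the kernel of the second
map is `L ∈ 𝒞⊥`.

In case (ii) take an approximation `0 ⟶ X ⟶ I ⟶ P ⟶ 0` with `I ∈ 𝒞⊥`, `P ∈ 𝒞` and factor `f`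
as `biprod.lift f j : X ⟶ Y ⊞ I` followed by `biprod.fst`. The kernel-cokernel sequence of a
composition makes `coker f` an extension of `coker (f ≫ g) ∈ 𝒞 ∩ 𝒵` by `K`, and the cokernel of
`biprod.lift f j` an extension of `coker f` by `I`; both extensions stay in `𝒞 ∩ 𝒵`. -/

open CategoryTheory.Category CategoryTheory.Preadditive

namespace IsShortExactSeq

variable {X Y Z : 𝒜} {f : X ⟶ Y} {g : Y ⟶ Z}

lemma w (h : IsShortExactSeq f g) : f ≫ g = 0 := h.choose

lemma shortExact (h : IsShortExactSeq f g) : (ShortComplex.mk f g h.w).ShortExact :=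
  h.choose_spec

lemma mono_f (h : IsShortExactSeq f g) : Mono f := h.shortExact.mono_f

lemma epi_g (h : IsShortExactSeq f g) : Epi g := h.shortExact.epi_g

lemma exists_lift (h : IsShortExactSeq f g) {A : 𝒜} (k : A ⟶ Y) (hk : k ≫ g = 0) :
    ∃ l : A ⟶ X, l ≫ f = k :=
  have := h.mono_f
  h.shortExact.exact.lift' k hk

lemma exists_desc (h : IsShortExactSeq f g) {A : 𝒜} (k : Y ⟶ A) (hk : f ≫ k = 0) :
    ∃ l : Z ⟶ A, g ≫ l = k :=
  have := h.epi_g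
  h.shortExact.exact.desc' k hk

lemma exists_section_of_retraction (h : IsShortExactSeq f g) {r : Y ⟶ X} (hr : f ≫ r = 𝟙 X) :
    ∃ s : Z ⟶ Y, s ≫ g = 𝟙 Z :=
  ⟨_, (ShortComplex.Splitting.ofExactOfRetraction _ h.shortExact.exact r hr h.epi_g).s_g⟩

lemma of_exact (w : f ≫ g = 0) [Mono f] [Epi g] (hS : (ShortComplex.mk f g w).Exact) :
    IsShortExactSeq f g :=
  ⟨w, .mk' hS inferInstance inferInstance⟩

lemma of_lift (w : f ≫ g = 0) [Mono f] [Epi g]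
    (hlift : ∀ ⦃A : 𝒜⦄ (t : A ⟶ Y), t ≫ g = 0 → ∃ u : A ⟶ X, u ≫ f = t) :
    IsShortExactSeq f g :=
  of_exact w (ShortComplex.exact_of_f_is_kernel _ (KernelFork.IsLimit.ofι' _ _ fun t ht =>
    ⟨(hlift t ht).choose, (hlift t ht).choose_spec⟩))

lemma of_desc (w : f ≫ g = 0) [Mono f] [Epi g]
    (hdesc : ∀ ⦃A : 𝒜⦄ (t : Y ⟶ A), f ≫ t = 0 → ∃ u : Z ⟶ A, g ≫ u = t) :
    IsShortExactSeq f g :=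
  of_exact w (ShortComplex.exact_of_g_is_cokernel _ (CokernelCofork.IsColimit.ofπ' _ _ fun t ht =>
    ⟨(hdesc t ht).choose, (hdesc t ht).choose_spec⟩))

lemma cokernel_π (f : X ⟶ Y) [Mono f] : IsShortExactSeq f (cokernel.π f) :=
  of_exact (cokernel.condition f) (ShortComplex.exact_of_g_is_cokernel _ (cokernelIsCokernel f))

lemma biprod_inl_snd (X K : 𝒜) : IsShortExactSeq (biprod.inl : X ⟶ X ⊞ K) biprod.snd :=
  ⟨by simp, ⟨(ShortComplex.Splitting.ofHasBinaryBiproduct X K).exact⟩⟩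

lemma biprod_inr_fst (Y I : 𝒜) : IsShortExactSeq (biprod.inr : I ⟶ Y ⊞ I) biprod.fst := by
  refine ⟨by simp, ⟨ShortComplex.Splitting.exact ?_⟩⟩
  exact
    { r := biprod.snd
      s := biprod.inl
      f_r := by simp
      s_g := by simp
      id := by dsimp; rw [add_comm]; exact biprod.total }

lemma pullback_snd (h : IsShortExactSeq f g) {W : 𝒜} (a : W ⟶ Z) :
    IsShortExactSeq (pullback.lift f 0 (by simp [h.w]) : X ⟶ pullback g a) (pullback.snd g a) := by
  have := h.mono_f
  have := h.epi_g
  have : Mono (pullback.lift f 0 (by simp [h.w]) : X ⟶ pullback g a) :=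
    mono_of_mono_fac (pullback.lift_fst _ _ _)
  refine of_lift (pullback.lift_snd _ _ _) fun A t ht => ?_
  obtain ⟨u, hu⟩ := h.exists_lift (t ≫ pullback.fst g a) (by
    rw [assoc, pullback.condition, reassoc_of% ht, zero_comp])
  exact ⟨u, pullback.hom_ext (by rw [assoc, pullback.lift_fst, hu])
    (by rw [assoc, pullback.lift_snd, comp_zero, ht])⟩

/-- For `f : X ⟶ Y` and `g : Y ⟶ Z` with `f ≫ g` mono and `g` epi, the kernel-cokernel sequence
of the composition reduces to `0 ⟶ ker g ⟶ coker f ⟶ coker (f ≫ g) ⟶ 0`. -/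
lemma cokernel_comp {K W : 𝒜} {k : K ⟶ Y} {w : Z ⟶ W}
    (hkg : IsShortExactSeq k g) (hw : IsShortExactSeq (f ≫ g) w) :
    IsShortExactSeq (k ≫ cokernel.π f) (cokernel.desc f (g ≫ w) (by rw [← assoc, hw.w])) := by
  have := hkg.mono_f
  have := hkg.epi_g
  have := hw.mono_f
  have := hw.epi_g
  have : Mono f := mono_of_mono f g
  have hπ := cokernel.π_desc f (g ≫ w) (by rw [← assoc, hw.w])
  have : Epi _ := epi_of_epi_fac hπ
  have : Mono (k ≫ cokernel.π f) := by
    refine mono_of_cancel_zero _ fun u hu => ?_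
    obtain ⟨v, hv⟩ := (cokernel_π f).exists_lift (u ≫ k) (by rwa [assoc])
    have hv0 : v = 0 := zero_of_comp_mono (f ≫ g) (by rw [← assoc, hv, assoc, hkg.w, comp_zero])
    exact zero_of_comp_mono k (by rw [← hv, hv0, zero_comp])
  refine of_desc (by rw [assoc, hπ, ← assoc, hkg.w, zero_comp]) fun A t ht => ?_
  obtain ⟨e, he⟩ := hkg.exists_desc (cokernel.π f ≫ t) (by rwa [← assoc])
  obtain ⟨e', he'⟩ := hw.exists_desc e (by rw [assoc, he, cokernel.condition_assoc, zero_comp])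
  exact ⟨e', by rw [← cancel_epi (cokernel.π f), reassoc_of% hπ, he', he]⟩

lemma biprod_lift_desc {K L : 𝒜} {k : K ⟶ Y} {l : L ⟶ X} {m : L ⟶ K}
    (hkg : IsShortExactSeq k g) (hl : IsShortExactSeq l (f ≫ g)) (hm : m ≫ k = l ≫ f) :
    IsShortExactSeq (biprod.lift l (-m)) (biprod.desc f k) := by
  have := hkg.mono_f
  have := hl.mono_f
  have := hl.epi_g
  have : Mono (biprod.lift l (-m)) := mono_of_mono_fac (biprod.lift_fst _ _)
  have : Epi (biprod.desc f k) := by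
    refine epi_of_cancel_zero _ fun c hc => ?_
    obtain ⟨d, hd⟩ := hkg.exists_desc c (by simpa using biprod.inr ≫= hc)
    have hd0 : d = 0 := zero_of_epi_comp (f ≫ g) (by simpa [hd] using biprod.inl ≫= hc)
    rw [← hd, hd0, comp_zero]
  refine of_lift (by simp [hm]) fun A t ht => ?_
  have hsum : t ≫ biprod.fst ≫ f = -(t ≫ biprod.snd ≫ k) :=
    eq_neg_of_add_eq_zero_left (by simpa [biprod.desc_eq] using ht)
  obtain ⟨v, hv⟩ := hl.exists_lift (t ≫ biprod.fst) (by
    rw [← assoc, assoc t, hsum]; simp [hkg.w])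
  refine ⟨v, biprod.hom_ext _ _ (by simpa using hv) ?_⟩
  rw [← cancel_mono k]
  simp only [assoc, biprod.lift_snd, neg_comp, hm, comp_neg]
  rw [reassoc_of% hv, hsum, neg_neg]

end IsShortExactSeq

def ExtensionClosed (P : 𝒜 → Prop) : Prop :=
  ∀ ⦃X Y Z : 𝒜⦄ (f : X ⟶ Y) (g : Y ⟶ Z), IsShortExactSeq f g → P X → P Z → P Y

namespace IsCotorsionPair

variable {E C I : 𝒜 → Prop}

lemma ambient_of_left (cp : IsCotorsionPair E C I) {X : 𝒜} (h : C X) : E X :=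
  ((cp.left_eq X).1 h).1

lemma ambient_of_right (cp : IsCotorsionPair E C I) {Y : 𝒜} (h : I Y) : E Y :=
  ((cp.right_eq Y).1 h).1

lemma ext1IsZero (cp : IsCotorsionPair E C I) {X Y : 𝒜} (hX : C X) (hY : I Y) :
    Ext1IsZero E X Y :=
  ((cp.left_eq X).1 hX).2 hY

/-- For `0 ⟶ X ⟶ Y ⟶ Z ⟶ 0`, an extension `0 ⟶ A ⟶ M ⟶ Y ⟶ 0` with `A ∈ I` splits over `X`,
which lifts `X ⟶ Y` to `t : X ⟶ M`; the induced extension of `Z` by `A` on `coker t` splits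
too. -/
lemma extensionClosed_left (cp : IsCotorsionPair E C I) (hE : ExtensionClosed E) :
    ExtensionClosed C := by
  intro X Y Z a b hab hX hZ
  refine (cp.left_eq Y).2 ⟨hE a b hab (cp.ambient_of_left hX) (cp.ambient_of_left hZ),
    fun A hA M f' g' _ hfg => ?_⟩
  have hP := hfg.pullback_snd a
  obtain ⟨r, hr⟩ := cp.ext1IsZero hX hA _ _
    (hE _ _ hP (cp.ambient_of_right hA) (cp.ambient_of_left hX)) hP
  obtain ⟨s, hs⟩ := hP.exists_section_of_retraction hr
  have ht : (s ≫ pullback.fst g' a) ≫ g' = a := by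
    rw [assoc, pullback.condition, reassoc_of% hs]
  have hQ := hfg.cokernel_comp (f := s ≫ pullback.fst g' a) (ht ▸ hab)
  obtain ⟨r', hr'⟩ := cp.ext1IsZero hZ hA _ _
    (hE _ _ hQ (cp.ambient_of_right hA) (cp.ambient_of_left hZ)) hQ
  exact ⟨cokernel.π _ ≫ r', by rw [← assoc, hr']⟩

end IsCotorsionPair

namespace CotorsionSetup

variable {E Cc Ip Zc : 𝒜 → Prop}

lemma left_of_extension (S : CotorsionSetup E Cc Ip Zc) {X Y Z : 𝒜} {f : X ⟶ Y} {g : Y ⟶ Z}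
    (h : IsShortExactSeq f g) (hX : Cc X) (hZ : Cc Z) : Cc Y :=
  S.cp.extensionClosed_left S.extClosedE f g h hX hZ

lemma left_of_kernel (S : CotorsionSetup E Cc Ip Zc) {K Y Z : 𝒜} {k : K ⟶ Y} {g : Y ⟶ Z}
    (h : IsShortExactSeq k g) (hK : Ip K) (hY : Cc Y) (hZ : Cc Z) : Cc K :=
  S.hereditary k g h (S.cp.ambient_of_right hK) hY hZ

lemma isAcyclicCofib_biprod_inl (S : CotorsionSetup E Cc Ip Zc) {X K : 𝒜} (hX : Cc X)
    (hK : Cc K) (hK' : Ip K) : IsAcyclicCofib Cc Zc (biprod.inl : X ⟶ X ⊞ K) :=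
  ⟨hX, S.left_of_extension (.biprod_inl_snd X K) hX hK, K, biprod.snd, hK, S.iSubZ hK',
    .biprod_inl_snd X K⟩

lemma isWeakEquiv_of_isAcyclicFib_comp (S : CotorsionSetup E Cc Ip Zc) {X Y Z : 𝒜}
    {f : X ⟶ Y} {g : Y ⟶ Z} (hX : Cc X) (hY : Cc Y) (hZ : Cc Z)
    (hg : IsAcyclicFib E Ip g) (hfg : IsAcyclicFib E Ip (f ≫ g)) : IsWeakEquiv E Cc Ip Zc f := by
  obtain ⟨-, -, K, k, hK, hkg⟩ := hg
  obtain ⟨hEX, -, L, l, hL, hlfg⟩ := hfg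
  obtain ⟨m, hm⟩ := hkg.exists_lift (l ≫ f) (by rw [assoc, hlfg.w])
  refine ⟨hX, hY, X ⊞ K, biprod.inl, biprod.desc f k,
    S.isAcyclicCofib_biprod_inl hX (S.left_of_kernel hkg hK hY hZ) hK, ?_, by simp⟩
  exact ⟨S.extClosedE _ _ (.biprod_inl_snd X K) hEX (S.cp.ambient_of_right hK),
    S.cp.ambient_of_left hY, L, _, hL, hkg.biprod_lift_desc hlfg hm⟩

lemma isWeakEquiv_of_isAcyclicCofib_comp (S : CotorsionSetup E Cc Ip Zc) {X Y Z : 𝒜}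
    {f : X ⟶ Y} {g : Y ⟶ Z} (hY : Cc Y) (hg : IsAcyclicFib E Ip g)
    (hfg : IsAcyclicCofib Cc Zc (f ≫ g)) : IsWeakEquiv E Cc Ip Zc f := by
  obtain ⟨-, -, K, k, hK, hkg⟩ := hg
  obtain ⟨hX, hZ, W, w, hW, hW', hfgw⟩ := hfg
  obtain ⟨I, P, j, _, hI, hP, hjc⟩ := S.complete.1 X (S.cp.ambient_of_left hX)
  have := hfgw.mono_f
  have := hjc.mono_f
  have : Mono f := mono_of_mono f g
  have : Mono (biprod.lift f j) := mono_of_mono_fac (biprod.lift_snd _ _)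
  have hI' : Cc I := S.left_of_extension hjc hX hP
  have hK' : Cc K := S.left_of_kernel hkg hK hY hZ
  have hQ := hkg.cokernel_comp hfgw
  have hQ' : Cc (cokernel f) := S.left_of_extension hQ hK' hW
  have hC := (IsShortExactSeq.biprod_inr_fst Y I).cokernel_comp
    (f := biprod.lift f j) (by simpa using IsShortExactSeq.cokernel_π f)
  have hC' : Cc (cokernel (biprod.lift f j)) := S.left_of_extension hC hI' hQ'
  have hCZ : Zc (cokernel (biprod.lift f j)) := S.zcExtClosed _ _ hC hI' hC' hQ' (S.iSubZ hI)
    (S.zcExtClosed _ _ hQ hK' hQ' hW (S.iSubZ hK) hW')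
  refine ⟨hX, hY, Y ⊞ I, biprod.lift f j, biprod.fst, ?_, ?_, by simp⟩
  · exact ⟨hX, S.left_of_extension (.biprod_inl_snd Y I) hY hI', _, _, hC', hCZ,
      .cokernel_π _⟩
  · exact ⟨S.extClosedE _ _ (.biprod_inl_snd Y I) (S.cp.ambient_of_left hY)
      (S.cp.ambient_of_right hI), S.cp.ambient_of_left hY, I, _, hI, .biprod_inr_fst Y I⟩

end CotorsionSetup

/-- **Partial 2-out-of-3.** In the standing setup, let `f` and
`g` be composable morphisms in `Cc` such that `g` and `g ∘ f` are weak
equivalences.  Then `f` is also a weak equivalence in each of the following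
cases: (i) `g` and `g ∘ f` are acyclic fibrations; (ii) `g` is an acyclic
fibration and `g ∘ f` is an acyclic cofibration. -/
theorem partial_two_out_of_three
    (E Cc Ip Zc : 𝒜 → Prop) (S : CotorsionSetup E Cc Ip Zc)
    {X Y Z : 𝒜} (f : X ⟶ Y) (g : Y ⟶ Z)
    (hX : Cc X) (hY : Cc Y) (hZ : Cc Z) :
    ((IsAcyclicFib E Ip g ∧ IsAcyclicFib E Ip (f ≫ g)) →
      IsWeakEquiv E Cc Ip Zc f) ∧
    ((IsAcyclicFib E Ip g ∧ IsAcyclicCofib Cc Zc (f ≫ g)) →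
      IsWeakEquiv E Cc Ip Zc f) :=
  ⟨fun ⟨hg, hfg⟩ => S.isWeakEquiv_of_isAcyclicFib_comp hX hY hZ hg hfg,
    fun ⟨hg, hfg⟩ => S.isWeakEquiv_of_isAcyclicCofib_comp hY hg hfg⟩
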